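/- Let 0 ≤ ε < 2 and let (ξ, η) : ℝ → ℝ² be a differentiable solution of the reduced Pikovsky–Topaj system. Then the function t ↦ (ξ(−t), −η(−t)) is also a solution of the same system. In other words, the reduced system is time-reversible with respect to the involution R : (ξ, η) ↦ (ξ, −η). -/

import Mathlib

open Real

/-! Under `(t, η) ↦ (-t, -η)` the phase `t - η` only changes sign, so the denominator
`2 + ε cos (t - η)` is unchanged, the `ξ`-component of the vector field changes sign (through
`sin η`) and the `η`-component is unchanged. Hence `t ↦ (ξ (-t), -η (-t))`, whose derivative
picks up one sign from the time reversal and, in the second component, one from `R`, solves the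
same system. -/

/-- `(ξ, η)` is a solution of the reduced (nonautonomous) Pikovsky–Topaj system
`ξ' = 2ε sin ξ sin η / (2 + ε cos(t − η))`,
`η' = (1 − ε cos(t − η) − 2ε cos ξ cos η) / (2 + ε cos(t − η))`. -/
def IsReducedPTSol (ε : ℝ) (ξ η : ℝ → ℝ) : Prop :=
  ∀ t : ℝ,
    HasDerivAt ξ
      (2 * ε * Real.sin (ξ t) * Real.sin (η t) / (2 + ε * Real.cos (t - η t))) t ∧
    HasDerivAt η
      ((1 - ε * Real.cos (t - η t) - 2 * ε * Real.cos (ξ t) * Real.cos (η t)) /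
        (2 + ε * Real.cos (t - η t))) t

theorem HasDerivAt.comp_neg {𝕜 F : Type*} [NontriviallyNormedField 𝕜] [NormedAddCommGroup F]
    [NormedSpace 𝕜 F] {f : 𝕜 → F} {f' : F} {x : 𝕜} (hf : HasDerivAt f f' (-x)) :
    HasDerivAt (fun y => f (-y)) (-f') x := by
  simpa [Function.comp_def] using hf.scomp x (hasDerivAt_neg x)

namespace ReducedPT

noncomputable def fieldξ (ε t x y : ℝ) : ℝ :=
  2 * ε * sin x * sin y / (2 + ε * cos (t - y))

noncomputable def fieldη (ε t x y : ℝ) : ℝ :=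
  (1 - ε * cos (t - y) - 2 * ε * cos x * cos y) / (2 + ε * cos (t - y))

theorem isReducedPTSol_iff (ε : ℝ) (ξ η : ℝ → ℝ) :
    IsReducedPTSol ε ξ η ↔
      ∀ t, HasDerivAt ξ (fieldξ ε t (ξ t) (η t)) t ∧ HasDerivAt η (fieldη ε t (ξ t) (η t)) t :=
  Iff.rfl

theorem cos_neg_sub_neg (t y : ℝ) : cos (t - -y) = cos (-t - y) := by
  rw [← cos_neg]; ring_nf

theorem fieldξ_neg (ε t x y : ℝ) : fieldξ ε t x (-y) = -fieldξ ε (-t) x y := by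
  simp only [fieldξ, cos_neg_sub_neg, sin_neg]; ring

theorem fieldη_neg (ε t x y : ℝ) : fieldη ε t x (-y) = fieldη ε (-t) x y := by
  simp only [fieldη, cos_neg_sub_neg, cos_neg]

end ReducedPT

open ReducedPT

theorem reducedPT_reversible_general (ε : ℝ) (ξ η : ℝ → ℝ)
    (h : IsReducedPTSol ε ξ η) :
    IsReducedPTSol ε (fun t => ξ (-t)) (fun t => -η (-t)) := by
  rw [isReducedPTSol_iff] at h ⊢
  intro t
  obtain ⟨hξ, hη⟩ := h (-t)
  constructor
  · rw [fieldξ_neg]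
    exact hξ.comp_neg
  · rw [fieldη_neg, ← neg_neg (fieldη ε _ _ _)]
    exact hη.comp_neg.neg

/-- The reduced Pikovsky–Topaj system is time-reversible with respect to the involution
`R : (ξ, η) ↦ (ξ, −η)`. -/
theorem reducedPT_reversible (ε : ℝ) (hε₀ : 0 ≤ ε) (hε₂ : ε < 2) (ξ η : ℝ → ℝ)
    (h : IsReducedPTSol ε ξ η) :
    IsReducedPTSol ε (fun t => ξ (-t)) (fun t => -η (-t)) :=
  reducedPT_reversible_general ε ξ η h
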